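/- arXiv:2407.08667 — 3 statements merged into one kernel-verified Lean document; each statement's English description precedes it below -/
import Mathlib

section
/- Let Γ be a connected directed graph without self-loops, let e ∈ Γ₁ be an edge, and let V₁, V₂ ⊆ Γ₀ be vertex subsets with h(e) ∈ V₁, t(e) ∈ V₂ and V₁ ∩ V₂ = ∅. Then for every C ∈ Cut(Γ; V₁, V₂): (i) e ∈ C, and (ii) the edge set (Γ₁ ∖ C) ∪ {e} is a spanning tree of Γ. In particular, every monomial Π_{e' ∈ C ∖ {e}} t_{e'} appearing in the numerator of the cut-set formula for (d_Γ(t)^{−1})^{ej} also appears (as Π_{e' ∉ T} t_{e'} for a spanning tree T) in the denominator Σ_{T ∈ Tree(Γ)} Π_{e' ∉ T} t_{e'}. -/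
open Matrix MeasureTheory
open scoped BigOperators Classical

/-- A directed graph with `n + 1` vertices (indexed by `Fin (n + 1)`) and `m` edges
(indexed by `Fin m`), given by head and tail maps and having no self-loops. -/
structure DGraph (n m : ℕ) where
  head : Fin m → Fin (n + 1)
  tail : Fin m → Fin (n + 1)
  no_self_loop : ∀ e, head e ≠ tail e

namespace DGraph

variable {n m : ℕ}

/-- The incidence matrix: `ρ e i = 1` if `head e = i`, `-1` if `tail e = i`, `0` otherwise. -/
def inc (G : DGraph n m) : Matrix (Fin m) (Fin (n + 1)) ℝ := fun e i =>
  if G.head e = i then 1 else if G.tail e = i then -1 else 0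

/-- The underlying undirected (simple) adjacency graph determined by a set of edges. -/
def adjGraph (G : DGraph n m) (S : Set (Fin m)) : SimpleGraph (Fin (n + 1)) :=
  SimpleGraph.fromRel (fun i j => ∃ e ∈ S, G.head e = i ∧ G.tail e = j)

/-- Connectedness of the underlying undirected multigraph. -/
def Conn (G : DGraph n m) : Prop := (G.adjGraph Set.univ).Connected

/-- A spanning tree: a set of `n` edges (one fewer than the number `n + 1` of vertices)
whose edges connect all the vertices. -/
def IsSpanningTree (G : DGraph n m) (T : Finset (Fin m)) : Prop :=
  T.card = n ∧ (G.adjGraph (T : Set (Fin m))).Connected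

/-- The weighted Laplacian `M_Γ(t)_{ij} = ∑_e ρ^e_i (1/t_e) ρ^e_j` over the first `n`
vertices (the last vertex deleted). -/
noncomputable def lap (G : DGraph n m) (t : Fin m → ℝ) : Matrix (Fin n) (Fin n) ℝ :=
  fun i j => ∑ e, G.inc e i.castSucc * (1 / t e) * G.inc e j.castSucc

/-- The reduced incidence matrix: delete the column of the last vertex. -/
def redInc (G : DGraph n m) : Matrix (Fin m) (Fin n) ℝ := fun e i => G.inc e i.castSucc

end DGraph

namespace DGraph

variable {n m : ℕ}

/-- Removing the edges of `C` from `Γ` divides `Γ` into exactly two connected trees,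
one containing `V₁` (with vertex set `A`) and the other containing `V₂` (with vertex
set `Aᶜ`): every surviving edge has both endpoints on one side, each side is connected
by the surviving edges, and on each side the number of surviving edges is one less
than the number of vertices. -/
def SplitsIntoTwoTrees (G : DGraph n m) (C : Finset (Fin m))
    (V₁ V₂ : Set (Fin (n + 1))) : Prop :=
  ∃ A : Finset (Fin (n + 1)),
    V₁ ⊆ (A : Set (Fin (n + 1))) ∧ V₂ ⊆ ((Aᶜ : Finset (Fin (n + 1))) : Set (Fin (n + 1))) ∧
    (∀ e ∉ C, (G.head e ∈ A ↔ G.tail e ∈ A)) ∧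
    (Finset.univ.filter fun e => e ∉ C ∧ G.head e ∈ A).card + 1 = A.card ∧
    (Finset.univ.filter fun e => e ∉ C ∧ G.head e ∉ A).card + 1 = Aᶜ.card ∧
    (∀ i ∈ A, ∀ j ∈ A,
      (G.adjGraph {e | e ∉ C ∧ G.head e ∈ A ∧ G.tail e ∈ A}).Reachable i j) ∧
    (∀ i ∈ Aᶜ, ∀ j ∈ Aᶜ,
      (G.adjGraph {e | e ∉ C ∧ G.head e ∉ A ∧ G.tail e ∉ A}).Reachable i j)

/-- `C ∈ Cut(Γ; V₁, V₂)`: removing `C` splits `Γ` into exactly two connected trees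
separating `V₁` from `V₂`, and no proper subset of `C` has this property. -/
def InCut (G : DGraph n m) (C : Finset (Fin m)) (V₁ V₂ : Set (Fin (n + 1))) : Prop :=
  G.SplitsIntoTwoTrees C V₁ V₂ ∧
    ∀ C' : Finset (Fin m), C' ⊂ C → ¬ G.SplitsIntoTwoTrees C' V₁ V₂

end DGraph


lemma DGraph.adjGraph_mono {n m : ℕ} (G : DGraph n m) {S S' : Set (Fin m)}
    (h : S ⊆ S') : G.adjGraph S ≤ G.adjGraph S' := by
  intro i j hij
  obtain ⟨hne, hr⟩ := hij
  refine ⟨hne, ?_⟩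
  rcases hr with ⟨e, he, h1, h2⟩ | ⟨e, he, h1, h2⟩
  · exact Or.inl ⟨e, h he, h1, h2⟩
  · exact Or.inr ⟨e, h he, h1, h2⟩

/-- Let `e` be an edge of a connected directed graph `Γ` without self-loops, and let
`V₁, V₂` be disjoint vertex subsets with `head e ∈ V₁` and `tail e ∈ V₂`. Then every
`C ∈ Cut(Γ; V₁, V₂)` contains `e`, the edge set `(Γ₁ ∖ C) ∪ {e}` is a spanning tree `T`
of `Γ`, and the complement of this spanning tree is exactly `C ∖ {e}` (so the monomial
`∏_{e' ∈ C ∖ {e}} t_{e'}` appears as `∏_{e' ∉ T} t_{e'}` in the spanning-tree sum). -/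
theorem cut_contains_edge_and_gives_spanning_tree {n m : ℕ} (hn : 1 ≤ n)
    (G : DGraph n m) (hG : G.Conn) (e : Fin m)
    (V₁ V₂ : Set (Fin (n + 1))) (h₁ : G.head e ∈ V₁) (h₂ : G.tail e ∈ V₂)
    (hdisj : Disjoint V₁ V₂) (C : Finset (Fin m)) (hC : G.InCut C V₁ V₂) :
    e ∈ C ∧ G.IsSpanningTree (insert e Cᶜ) ∧ (insert e Cᶜ)ᶜ = C.erase e := by
  obtain ⟨⟨A, hV₁, hV₂, hnc, hcard₁, hcard₂, hreachA, hreachB⟩, -⟩ := hC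
  have hhA : G.head e ∈ A := hV₁ h₁
  have htB : G.tail e ∈ Aᶜ := hV₂ h₂
  have htA : G.tail e ∉ A := by simpa using htB
  have heC : e ∈ C := by
    by_contra h
    exact htA ((hnc e h).mp hhA)
  have heCc : e ∉ Cᶜ := by simp [heC]
  -- cardinality
  have hsplitcard :
      (Finset.univ.filter fun e' => e' ∉ C ∧ G.head e' ∈ A).card +
        (Finset.univ.filter fun e' => e' ∉ C ∧ G.head e' ∉ A).card = Cᶜ.card := by
    rw [← Finset.card_filter_add_card_filter_not (s := Cᶜ)
      (p := fun e' => G.head e' ∈ A)]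
    congr 1 <;> · apply Finset.card_bij (fun x _ => x) <;> simp +contextual [Finset.mem_compl]
  have hAcard : A.card + Aᶜ.card = n + 1 := by
    rw [Finset.card_add_card_compl]
    simp
  have hcard : (insert e Cᶜ).card = n := by
    rw [Finset.card_insert_of_notMem heCc]
    omega
  -- connectivity
  have hsub1 : {e' | e' ∉ C ∧ G.head e' ∈ A ∧ G.tail e' ∈ A} ⊆
      ((insert e Cᶜ : Finset (Fin m)) : Set (Fin m)) := by
    intro x hx
    simp [Finset.mem_compl, hx.1]
  have hsub2 : {e' | e' ∉ C ∧ G.head e' ∉ A ∧ G.tail e' ∉ A} ⊆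
      ((insert e Cᶜ : Finset (Fin m)) : Set (Fin m)) := by
    intro x hx
    simp [Finset.mem_compl, hx.1]
  have hadj : (G.adjGraph ((insert e Cᶜ : Finset (Fin m)) : Set (Fin m))).Adj
      (G.head e) (G.tail e) := by
    refine ⟨G.no_self_loop e, Or.inl ⟨e, by simp, rfl, rfl⟩⟩
  have key : ∀ v, (G.adjGraph ((insert e Cᶜ : Finset (Fin m)) : Set (Fin m))).Reachable
      v (G.head e) := by
    intro v
    by_cases hv : v ∈ A
    · exact (hreachA v hv (G.head e) hhA).mono (G.adjGraph_mono hsub1)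
    · have : (G.adjGraph ((insert e Cᶜ : Finset (Fin m)) : Set (Fin m))).Reachable
          v (G.tail e) := by
        refine ((hreachB v ?_ (G.tail e) htB).mono (G.adjGraph_mono hsub2))
        simpa using hv
      exact this.trans hadj.symm.reachable
  have hconn : (G.adjGraph ((insert e Cᶜ : Finset (Fin m)) : Set (Fin m))).Connected := by
    rw [SimpleGraph.connected_iff]
    exact ⟨fun i j => (key i).trans (key j).symm, ⟨0⟩⟩
  refine ⟨heC, ⟨hcard, hconn⟩, ?_⟩
  ext x
  by_cases hx : x = e <;> simp [hx, heC, Finset.mem_erase]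
end

section
/- Let Γ be a connected directed graph without self-loops with m edges and n ≥ 2 vertices, and let ρ̂ be its m×(n−1) reduced incidence matrix. Then there is a constant c_Γ > 0 depending only on Γ (one may take c_Γ = m · max_{e,e'} |(ρ̂ρ̂ᵀ)_{ee'}|) such that for every vector t̃ = (t̃_e) of positive reals, the matrix A(t̃) = ρ̂ᵀ diag(t̃) ρ̂ is invertible and, in the Loewner order, A(t̃)^{−1} (ρ̂ᵀ diag(t̃²) ρ̂) A(t̃)^{−1} ≥ (1/c_Γ) · Id, where diag(t̃²) is the diagonal matrix with entries t̃_e². -/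
open Matrix MeasureTheory
open scoped BigOperators Classical

/-!
Write `A = ρ̂ᵀ diag(t) ρ̂` and `B = ρ̂ᵀ diag(t²) ρ̂`. For a connected graph `ρ̂` is injective, so
`A` is positive definite. Given `x`, put `y = A⁻¹ x` and `w = t ⊙ ρ̂ y`; then `x = A y = ρ̂ᵀ w` and
`x ⬝ A⁻¹ B A⁻¹ x = y ⬝ B y = |w|²`. Cauchy–Schwarz gives `|x|² = |ρ̂ᵀ w|² ≤ ‖ρ̂‖_F² |w|²`, a bound
in which `t` no longer appears, so `c = ‖ρ̂‖_F² + 1` works.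
-/

namespace Matrix

variable {ι κ : Type*} [Fintype ι] [Fintype κ]

theorem sum_sq_transpose_mulVec_le (ρ : Matrix ι κ ℝ) (w : ι → ℝ) :
    ∑ i, (ρᵀ *ᵥ w) i ^ 2 ≤ (∑ i, ∑ e, ρ e i ^ 2) * ∑ e, w e ^ 2 := by
  rw [Finset.sum_mul]
  refine Finset.sum_le_sum fun i _ => ?_
  simpa [mulVec, dotProduct] using Finset.sum_mul_sq_le_sq_mul_sq Finset.univ (ρ · i) w

variable [DecidableEq ι]

theorem transpose_mul_diagonal_mul_mulVec (ρ : Matrix ι κ ℝ) (d : ι → ℝ) (y : κ → ℝ) :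
    (ρᵀ * diagonal d * ρ) *ᵥ y = ρᵀ *ᵥ (d * ρ *ᵥ y) := by
  rw [← mulVec_mulVec, ← mulVec_mulVec]
  exact congrArg (ρᵀ *ᵥ ·) (funext (mulVec_diagonal d _))

theorem dotProduct_transpose_mul_diagonal_mul_mulVec (ρ : Matrix ι κ ℝ) (d : ι → ℝ)
    (y : κ → ℝ) : y ⬝ᵥ ((ρᵀ * diagonal d * ρ) *ᵥ y) = ∑ e, d e * (ρ *ᵥ y) e ^ 2 := by
  rw [transpose_mul_diagonal_mul_mulVec, dotProduct_mulVec, vecMul_transpose]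
  simp only [dotProduct, Pi.mul_apply]
  exact Finset.sum_congr rfl fun e _ => by ring

variable [DecidableEq κ]

theorem dotProduct_inv_mul_mul_inv_mulVec (ρ : Matrix ι κ ℝ) (t : ι → ℝ) (x : κ → ℝ) :
    x ⬝ᵥ (((ρᵀ * diagonal t * ρ)⁻¹ * (ρᵀ * diagonal (fun e => t e ^ 2) * ρ) *
        (ρᵀ * diagonal t * ρ)⁻¹) *ᵥ x) =
      ∑ e, (t e * (ρ *ᵥ (ρᵀ * diagonal t * ρ)⁻¹ *ᵥ x) e) ^ 2 := by
  set A := ρᵀ * diagonal t * ρ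
  have hA : A⁻¹ᵀ = A⁻¹ := by rw [transpose_nonsing_inv]; simp [A, Matrix.mul_assoc]
  rw [← mulVec_mulVec, ← mulVec_mulVec, dotProduct_mulVec, ← hA, vecMul_transpose, hA,
    dotProduct_transpose_mul_diagonal_mul_mulVec]
  exact Finset.sum_congr rfl fun e _ => by ring

theorem eq_transpose_mulVec_of_isUnit (ρ : Matrix ι κ ℝ) (t : ι → ℝ)
    (hA : IsUnit (ρᵀ * diagonal t * ρ)) (x : κ → ℝ) :
    x = ρᵀ *ᵥ (t * ρ *ᵥ (ρᵀ * diagonal t * ρ)⁻¹ *ᵥ x) := by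
  rw [← transpose_mul_diagonal_mul_mulVec, mulVec_mulVec, mul_nonsing_inv _
    ((isUnit_iff_isUnit_det _).mp hA), one_mulVec]

theorem sum_sq_le_mul_dotProduct_inv_mul_mul_inv_mulVec (ρ : Matrix ι κ ℝ) (t : ι → ℝ)
    (hA : IsUnit (ρᵀ * diagonal t * ρ)) (x : κ → ℝ) :
    ∑ i, x i ^ 2 ≤ (∑ i, ∑ e, ρ e i ^ 2) *
      x ⬝ᵥ (((ρᵀ * diagonal t * ρ)⁻¹ * (ρᵀ * diagonal (fun e => t e ^ 2) * ρ) *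
        (ρᵀ * diagonal t * ρ)⁻¹) *ᵥ x) := by
  rw [dotProduct_inv_mul_mul_inv_mulVec]
  conv_lhs => rw [eq_transpose_mulVec_of_isUnit ρ t hA x]
  exact sum_sq_transpose_mulVec_le ρ _

end Matrix

theorem SimpleGraph.Reachable.eq_of_forall_adj {V β : Type*} {G : SimpleGraph V} {f : V → β}
    (hf : ∀ u v, G.Adj u v → f u = f v) {u v : V} (h : G.Reachable u v) : f u = f v := by
  obtain ⟨p⟩ := h
  induction p with
  | nil => rfl
  | cons hadj _ ih => exact (hf _ _ hadj).trans ih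

namespace DGraph

variable {n m : ℕ} (G : DGraph n m)

theorem inc_eq_single_sub_single (e : Fin m) :
    G.inc e = Pi.single (G.head e) 1 - Pi.single (G.tail e) 1 := by
  funext i
  have := G.no_self_loop e
  by_cases hh : G.head e = i <;> by_cases ht : G.tail e = i <;>
    simp_all [inc, Pi.single_apply, eq_comm]

theorem redInc_mulVec_apply (v : Fin n → ℝ) (e : Fin m) :
    (G.redInc *ᵥ v) e = (Fin.snoc v 0 : Fin (n + 1) → ℝ) (G.head e) -
      (Fin.snoc v 0 : Fin (n + 1) → ℝ) (G.tail e) := by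
  have : (G.redInc *ᵥ v) e = G.inc e ⬝ᵥ (Fin.snoc v 0 : Fin (n + 1) → ℝ) := by
    simp [mulVec, dotProduct, Fin.sum_univ_castSucc, redInc]
  rw [this, inc_eq_single_sub_single, sub_dotProduct, single_dotProduct, single_dotProduct,
    one_mul, one_mul]

theorem injective_redInc_mulVec (hG : G.Conn) : Function.Injective G.redInc.mulVec := by
  refine (injective_iff_map_eq_zero G.redInc.mulVecLin).mpr fun v hv => ?_
  set w : Fin (n + 1) → ℝ := Fin.snoc v 0
  have hedge : ∀ e, w (G.head e) = w (G.tail e) := fun e =>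
    sub_eq_zero.mp ((G.redInc_mulVec_apply v e).symm.trans (congrFun hv e))
  have hadj : ∀ i j, (G.adjGraph Set.univ).Adj i j → w i = w j := by
    rintro i j ⟨-, ⟨e, -, rfl, rfl⟩ | ⟨e, -, rfl, rfl⟩⟩
    exacts [hedge e, (hedge e).symm]
  funext i
  simpa [w] using (hG.preconnected i.castSucc (Fin.last n)).eq_of_forall_adj hadj

theorem posDef_transpose_mul_diagonal_mul_redInc (hG : G.Conn) {t : Fin m → ℝ}
    (ht : ∀ e, 0 < t e) : (G.redIncᵀ * diagonal t * G.redInc).PosDef := by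
  simpa using
    (posDef_diagonal_iff.mpr ht).conjTranspose_mul_mul_same (G.injective_redInc_mulVec hG)

end DGraph

theorem loewner_lower_bound_for_schwinger_matrix_general {n m : ℕ}
    (G : DGraph n m) (hG : G.Conn) :
    ∃ c : ℝ, 0 < c ∧
      ∀ t : Fin m → ℝ, (∀ e, 0 < t e) →
        IsUnit ((G.redInc)ᵀ * Matrix.diagonal t * G.redInc) ∧
        ∀ x : Fin n → ℝ,
          (1 / c) * ∑ i, x i ^ 2 ≤
            x ⬝ᵥ (((((G.redInc)ᵀ * Matrix.diagonal t * G.redInc)⁻¹) *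
                ((G.redInc)ᵀ * Matrix.diagonal (fun e => t e ^ 2) * G.redInc) *
                (((G.redInc)ᵀ * Matrix.diagonal t * G.redInc)⁻¹)) *ᵥ x) := by
  refine ⟨∑ i, ∑ e, G.redInc e i ^ 2 + 1, by positivity, fun t ht => ?_⟩
  have hA := (G.posDef_transpose_mul_diagonal_mul_redInc hG ht).isUnit
  refine ⟨hA, fun x => ?_⟩
  have hle := sum_sq_le_mul_dotProduct_inv_mul_mul_inv_mulVec G.redInc t hA x
  rw [dotProduct_inv_mul_mul_inv_mulVec] at hle ⊢
  rw [one_div_mul_eq_div, div_le_iff₀ (by positivity)]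
  nlinarith [Finset.sum_nonneg fun e (_ : e ∈ Finset.univ) =>
    sq_nonneg (t e * (G.redInc *ᵥ (G.redIncᵀ * diagonal t * G.redInc)⁻¹ *ᵥ x) e)]

/-- For a connected directed graph without self-loops with reduced incidence matrix `ρ̂`,
there is a constant `c_Γ > 0` (depending only on `Γ`) such that for every vector `t̃` of
positive reals, `A(t̃) = ρ̂ᵀ diag(t̃) ρ̂` is invertible and, in the Loewner order,
`A(t̃)⁻¹ (ρ̂ᵀ diag(t̃²) ρ̂) A(t̃)⁻¹ ≥ (1/c_Γ) · Id`. -/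
theorem loewner_lower_bound_for_schwinger_matrix {n m : ℕ} (hn : 1 ≤ n)
    (G : DGraph n m) (hG : G.Conn) :
    ∃ c : ℝ, 0 < c ∧
      ∀ t : Fin m → ℝ, (∀ e, 0 < t e) →
        IsUnit ((G.redInc)ᵀ * Matrix.diagonal t * G.redInc) ∧
        ∀ x : Fin n → ℝ,
          (1 / c) * ∑ i, x i ^ 2 ≤
            x ⬝ᵥ (((((G.redInc)ᵀ * Matrix.diagonal t * G.redInc)⁻¹) *
                ((G.redInc)ᵀ * Matrix.diagonal (fun e => t e ^ 2) * G.redInc) *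
                (((G.redInc)ᵀ * Matrix.diagonal t * G.redInc)⁻¹)) *ᵥ x) :=
  loewner_lower_bound_for_schwinger_matrix_general G hG
end

section
/- Fix integers d ≥ 1 and d' ≥ 0, and let H(t, z, x) = 2^{−(d+d')} (π t)^{−(d + d'/2)} exp(−(2 Σ_{i=1}^d |z_i|² + Σ_{j=1}^{d'} x_j²)/(4t)) be the heat kernel on ℂ^d × ℝ^{d'}. Then for every (z, x) ∈ ℂ^d × ℝ^{d'} with (z, x) ≠ 0 and every 1 ≤ i ≤ d, the Schwinger-time integral of the ∂̄*-component of the heat kernel converges and equals the corresponding coefficient of the generalized Bochner–Martinelli kernel: ∫₀^∞ (z̄_i / t) · H(t, z, x) dt = (2^d Γ(d + d'/2) / π^{d + d'/2}) · z̄_i / (2 Σ_{k=1}^d |z_k|² + Σ_{j=1}^{d'} x_j²)^{d + d'/2}. -/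
/-!
Schwinger parametrisation: the substitution `t ↦ 1/t` turns `∫₀^∞ t^{-s-1} e^{-c/t} dt` into
Euler's integral `∫₀^∞ u^{s-1} e^{-cu} du = Γ(s) c^{-s}`. With `s = d + d'/2` and
`c = (2|z|² + |x|²)/4`, the heat kernel divided by `t` is of this form, and the constants
combine as `2^{-(d+d')} · 4^s = 2^d`.
-/

open MeasureTheory
open scoped BigOperators

/-- The heat kernel `H(t, z, x)` on `ℂ^d × ℝ^{d'}`:
`H = 2^{-(d+d')} (π t)^{-(d + d'/2)} exp(-(2 ∑ |z_i|² + ∑ x_j²)/(4t))`. -/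
noncomputable def heatH (d d' : ℕ) (t : ℝ) (z : Fin d → ℂ) (x : Fin d' → ℝ) : ℝ :=
  (2 : ℝ) ^ (-((d : ℝ) + (d' : ℝ))) * (Real.pi * t) ^ (-((d : ℝ) + (d' : ℝ) / 2)) *
    Real.exp (-(2 * ∑ i, ‖z i‖ ^ 2 + ∑ j, (x j) ^ 2) / (4 * t))

open Real Set

section Schwinger

variable {s c : ℝ}

lemma rpow_neg_sub_one_mul_exp_neg_div_eq {t : ℝ} (ht : 0 < t) :
    t ^ (-s - 1) * exp (-(c / t)) =
      t ^ ((-1 : ℝ) - 1) • ((t ^ (-1 : ℝ)) ^ (s - 1) * exp (-(c * t ^ (-1 : ℝ)))) := by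
  rw [rpow_neg_one, inv_rpow ht.le, smul_eq_mul, ← mul_assoc, ← rpow_neg ht.le,
    ← rpow_add ht, div_eq_mul_inv]
  ring_nf

lemma integrableOn_rpow_mul_exp_neg_div (hs : 0 < s) (hc : 0 < c) :
    IntegrableOn (fun t : ℝ => t ^ (-s - 1) * exp (-(c / t))) (Ioi 0) := by
  have h := integrableOn_rpow_mul_exp_neg_mul_rpow (p := 1) (by linarith : -1 < s - 1) one_pos hc
  simp only [rpow_one, neg_mul] at h
  refine (integrableOn_congr_fun (fun t ht => rpow_neg_sub_one_mul_exp_neg_div_eq ht)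
    measurableSet_Ioi).mpr ?_
  exact (integrableOn_Ioi_comp_rpow_iff' _ (by norm_num : (-1 : ℝ) ≠ 0)).mpr h

lemma integral_rpow_mul_exp_neg_div (hs : 0 < s) (hc : 0 < c) :
    ∫ t in Ioi 0, t ^ (-s - 1) * exp (-(c / t)) = Gamma s * c ^ (-s) := by
  calc ∫ t in Ioi 0, t ^ (-s - 1) * exp (-(c / t))
      = ∫ t in Ioi 0, (|(-1 : ℝ)| * t ^ ((-1 : ℝ) - 1)) •
          ((t ^ (-1 : ℝ)) ^ (s - 1) * exp (-(c * t ^ (-1 : ℝ)))) := by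
        refine setIntegral_congr_fun measurableSet_Ioi fun t ht => ?_
        rw [abs_neg, abs_one, one_mul]
        exact rpow_neg_sub_one_mul_exp_neg_div_eq ht
    _ = ∫ u in Ioi 0, u ^ (s - 1) * exp (-(c * u)) :=
        integral_comp_rpow_Ioi (fun u => u ^ (s - 1) * exp (-(c * u))) (by norm_num)
    _ = Gamma s * c ^ (-s) := by
        rw [integral_rpow_mul_exp_neg_mul_Ioi hs hc, one_div, inv_rpow hc.le, rpow_neg hc.le,
          mul_comm]

end Schwinger

lemma two_mul_sum_norm_sq_add_sum_sq_pos {ι κ E : Type*} [Fintype ι] [Fintype κ]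
    [NormedAddCommGroup E] {z : ι → E} {x : κ → ℝ} (h : (z, x) ≠ 0) :
    0 < 2 * ∑ k, ‖z k‖ ^ 2 + ∑ j, x j ^ 2 := by
  have hz : 0 ≤ ∑ k, ‖z k‖ ^ 2 := by positivity
  have hx : 0 ≤ ∑ j, x j ^ 2 := by positivity
  refine lt_of_le_of_ne (by positivity) fun h0 => h ?_
  have hz0 := (Finset.sum_eq_zero_iff_of_nonneg fun k _ => by positivity).mp
    (by linarith : ∑ k, ‖z k‖ ^ 2 = 0)
  have hx0 := (Finset.sum_eq_zero_iff_of_nonneg fun j _ => by positivity).mp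
    (by linarith : ∑ j, x j ^ 2 = 0)
  ext k
  · simpa using hz0 k (Finset.mem_univ k)
  · simpa using hx0 k (Finset.mem_univ k)

section HeatKernel

variable {d d' : ℕ} {z : Fin d → ℂ} {x : Fin d' → ℝ}

lemma heatH_div_eq {t : ℝ} (ht : 0 < t) :
    heatH d d' t z x / t = 2 ^ (-((d : ℝ) + d')) * π ^ (-((d : ℝ) + d' / 2)) *
      (t ^ (-((d : ℝ) + d' / 2) - 1) *
        exp (-((2 * ∑ k, ‖z k‖ ^ 2 + ∑ j, x j ^ 2) / 4 / t))) := by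
  rw [heatH, mul_rpow pi_pos.le ht.le, rpow_sub ht, rpow_one, div_div, neg_div]
  ring

lemma integrableOn_heatH_div (hs : 0 < (d : ℝ) + d' / 2)
    (ha : 0 < 2 * ∑ k, ‖z k‖ ^ 2 + ∑ j, x j ^ 2) :
    IntegrableOn (fun t => heatH d d' t z x / t) (Ioi 0) :=
  (integrableOn_congr_fun (fun _ ht => heatH_div_eq ht) measurableSet_Ioi).mpr
    ((integrableOn_rpow_mul_exp_neg_div hs (by positivity)).const_mul _)

lemma integral_heatH_div (hs : 0 < (d : ℝ) + d' / 2)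
    (ha : 0 < 2 * ∑ k, ‖z k‖ ^ 2 + ∑ j, x j ^ 2) :
    ∫ t in Ioi 0, heatH d d' t z x / t =
      2 ^ d * Gamma ((d : ℝ) + d' / 2) / π ^ ((d : ℝ) + d' / 2) /
        (2 * ∑ k, ‖z k‖ ^ 2 + ∑ j, x j ^ 2) ^ ((d : ℝ) + d' / 2) := by
  set s : ℝ := (d : ℝ) + d' / 2
  set a := 2 * ∑ k, ‖z k‖ ^ 2 + ∑ j, x j ^ 2
  have hquarter : (a / 4) ^ (-s) = 2 ^ (2 * s) / a ^ s := by
    rw [rpow_neg (by positivity), div_rpow ha.le (by norm_num), inv_div,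
      show (4 : ℝ) = 2 ^ (2 : ℝ) by norm_num, ← rpow_mul zero_le_two]
  have htwo : (2 : ℝ) ^ (-((d : ℝ) + d')) * 2 ^ (2 * s) = 2 ^ d := by
    rw [← rpow_add two_pos, ← rpow_natCast]
    congr 1
    simp only [s]
    ring
  rw [setIntegral_congr_fun measurableSet_Ioi fun _ ht => heatH_div_eq ht, integral_const_mul,
    integral_rpow_mul_exp_neg_div hs (by positivity), hquarter, rpow_neg pi_pos.le, ← htwo]
  ring

end HeatKernel

theorem schwinger_integral_bochner_martinelli_general (d d' : ℕ)
    (z : Fin d → ℂ) (x : Fin d' → ℝ) (hzx : (z, x) ≠ 0) (i : Fin d) :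
    IntegrableOn
      (fun t : ℝ => ((starRingEnd ℂ) (z i) / (t : ℂ)) * (heatH d d' t z x : ℂ))
      (Set.Ioi 0) ∧
    ∫ t in Set.Ioi (0 : ℝ), ((starRingEnd ℂ) (z i) / (t : ℂ)) * (heatH d d' t z x : ℂ) =
      (((2 : ℝ) ^ d * Real.Gamma ((d : ℝ) + (d' : ℝ) / 2) /
          Real.pi ^ ((d : ℝ) + (d' : ℝ) / 2) /
          (2 * ∑ k, ‖z k‖ ^ 2 + ∑ j, (x j) ^ 2) ^ ((d : ℝ) + (d' : ℝ) / 2)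
          : ℝ) : ℂ) *
        (starRingEnd ℂ) (z i) := by
  have hs : 0 < (d : ℝ) + d' / 2 := by
    have : (0 : ℝ) < d := Nat.cast_pos.mpr i.pos
    positivity
  have ha := two_mul_sum_norm_sq_add_sum_sq_pos hzx
  have hintegrand : (fun t : ℝ => (starRingEnd ℂ (z i) / t) * (heatH d d' t z x : ℂ)) =
      fun t => starRingEnd ℂ (z i) * ((heatH d d' t z x / t : ℝ) : ℂ) := by
    funext t
    push_cast
    ring
  rw [hintegrand]
  refine ⟨(integrableOn_heatH_div hs ha).ofReal.const_mul _, ?_⟩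
  rw [integral_const_mul, integral_complex_ofReal, integral_heatH_div hs ha, mul_comm]

/-- For every `(z, x) ≠ 0` and `1 ≤ i ≤ d`, the Schwinger-time integral
`∫₀^∞ (z̄_i / t) H(t, z, x) dt` converges and equals the corresponding coefficient of the
generalized Bochner–Martinelli kernel,
`(2^d Γ(d + d'/2) / π^{d + d'/2}) · z̄_i / (2 ∑ |z_k|² + ∑ x_j²)^{d + d'/2}`. -/
theorem schwinger_integral_bochner_martinelli (d d' : ℕ) (hd : 1 ≤ d)
    (z : Fin d → ℂ) (x : Fin d' → ℝ) (hzx : (z, x) ≠ 0) (i : Fin d) :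
    IntegrableOn
      (fun t : ℝ => ((starRingEnd ℂ) (z i) / (t : ℂ)) * (heatH d d' t z x : ℂ))
      (Set.Ioi 0) ∧
    ∫ t in Set.Ioi (0 : ℝ), ((starRingEnd ℂ) (z i) / (t : ℂ)) * (heatH d d' t z x : ℂ) =
      (((2 : ℝ) ^ d * Real.Gamma ((d : ℝ) + (d' : ℝ) / 2) /
          Real.pi ^ ((d : ℝ) + (d' : ℝ) / 2) /
          (2 * ∑ k, ‖z k‖ ^ 2 + ∑ j, (x j) ^ 2) ^ ((d : ℝ) + (d' : ℝ) / 2)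
          : ℝ) : ℂ) *
        (starRingEnd ℂ) (z i) :=
  schwinger_integral_bochner_martinelli_general d d' z x hzx i
end
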